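/- arXiv:2205.01493 — 3 statements merged into one kernel-verified Lean document; each statement's English description precedes it below -/
import Mathlib

section
/- Let E be a complex inner product space, let A and B be symmetric linear operators on E, and let ψ ∈ E with ‖ψ‖ = 1. Define the expectation values ⟨A⟩ = ⟪ψ, A ψ⟫ and ⟨B⟩ = ⟪ψ, B ψ⟫, and the standard deviations σ_A = ‖A ψ - ⟨A⟩ • ψ‖ and σ_B = ‖B ψ - ⟨B⟩ • ψ‖. Then σ_A · σ_B ≥ (1/2) · ‖⟪ψ, (A ∘ B - B ∘ A) ψ⟫‖, i.e. the product of the standard deviations of two symmetric operators in a normalized state is bounded below by half the absolute value of the expectation of their commutator (the Robertson uncertainty relation, which is the abstract form of the paper's Theorem 1). -/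
/-!
Replacing `A` and `B` by the centred operators `A - ⟨A⟩` and `B - ⟨B⟩` changes neither their
symmetry (expectation values of symmetric operators are real) nor their commutator. For
symmetric `S`, `T` one has `⟪ψ, [S, T] ψ⟫ = ⟪S ψ, T ψ⟫ - ⟪T ψ, S ψ⟫`, and Cauchy–Schwarz bounds
each term by `‖S ψ‖ * ‖T ψ‖`.
-/

open ComplexConjugate

namespace LinearMap

theorem commutator_sub_smul_id {R M : Type*} [CommRing R] [AddCommGroup M]
    [Module R M] (S T : M →ₗ[R] M) (a b : R) :
    (S - a • id) ∘ₗ (T - b • id) - (T - b • id) ∘ₗ (S - a • id) = S ∘ₗ T - T ∘ₗ S := by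
  ext x
  simp only [sub_apply, comp_apply, smul_apply, id_apply, map_sub, map_smul]
  module

variable {𝕜 E : Type*} [RCLike 𝕜] [NormedAddCommGroup E] [InnerProductSpace 𝕜 E]

theorem IsSymmetric.conj_inner_apply_self {T : E →ₗ[𝕜] E} (hT : T.IsSymmetric) (x : E) :
    conj (inner 𝕜 x (T x)) = inner 𝕜 x (T x) :=
  RCLike.conj_eq_iff_im.mpr (hT.im_inner_self_apply x)

theorem IsSymmetric.sub_inner_apply_self_smul_id {T : E →ₗ[𝕜] E} (hT : T.IsSymmetric) (x : E) :
    (T - inner 𝕜 x (T x) • id).IsSymmetric :=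
  hT.sub (IsSymmetric.id.smul (hT.conj_inner_apply_self x))

theorem IsSymmetric.inner_commutator_apply {S T : E →ₗ[𝕜] E} (hS : S.IsSymmetric)
    (hT : T.IsSymmetric) (x : E) :
    inner 𝕜 x ((S ∘ₗ T - T ∘ₗ S) x) = inner 𝕜 (S x) (T x) - inner 𝕜 (T x) (S x) := by
  rw [sub_apply, inner_sub_right, comp_apply, comp_apply, ← hS x (T x), ← hT x (S x)]

theorem IsSymmetric.norm_inner_commutator_apply_le {S T : E →ₗ[𝕜] E} (hS : S.IsSymmetric)
    (hT : T.IsSymmetric) (x : E) :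
    ‖inner 𝕜 x ((S ∘ₗ T - T ∘ₗ S) x)‖ ≤ 2 * (‖S x‖ * ‖T x‖) := by
  rw [hS.inner_commutator_apply hT]
  calc ‖inner 𝕜 (S x) (T x) - inner 𝕜 (T x) (S x)‖
      ≤ ‖inner 𝕜 (S x) (T x)‖ + ‖inner 𝕜 (T x) (S x)‖ := norm_sub_le _ _
    _ ≤ ‖S x‖ * ‖T x‖ + ‖T x‖ * ‖S x‖ :=
      add_le_add (norm_inner_le_norm _ _) (norm_inner_le_norm _ _)
    _ = 2 * (‖S x‖ * ‖T x‖) := by ring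

end LinearMap

theorem robertson_uncertainty_general {E : Type*} [NormedAddCommGroup E] [InnerProductSpace ℂ E]
    (A B : E →ₗ[ℂ] E)
    (hA : ∀ x y : E, (inner ℂ (A x) y : ℂ) = inner ℂ x (A y))
    (hB : ∀ x y : E, (inner ℂ (B x) y : ℂ) = inner ℂ x (B y))
    (ψ : E) :
    ‖A ψ - (inner ℂ ψ (A ψ) : ℂ) • ψ‖ * ‖B ψ - (inner ℂ ψ (B ψ) : ℂ) • ψ‖ ≥
      (1 / 2) * ‖(inner ℂ ψ ((A ∘ₗ B - B ∘ₗ A) ψ) : ℂ)‖ := by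
  have hA' := LinearMap.IsSymmetric.sub_inner_apply_self_smul_id hA ψ
  have hB' := LinearMap.IsSymmetric.sub_inner_apply_self_smul_id hB ψ
  have hbound := hA'.norm_inner_commutator_apply_le hB' ψ
  rw [LinearMap.commutator_sub_smul_id] at hbound
  simp only [LinearMap.sub_apply, LinearMap.smul_apply, LinearMap.id_apply] at hbound ⊢
  linarith

/-- **Robertson uncertainty relation** (abstract form of the paper's Theorem 1).
For symmetric operators `A`, `B` on a complex inner product space and a normalized
state `ψ`, the product of the standard deviations
`σ_A = ‖A ψ - ⟨A⟩ • ψ‖` and `σ_B = ‖B ψ - ⟨B⟩ • ψ‖` (with `⟨A⟩ = ⟪ψ, A ψ⟫`)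
is at least half the norm of the commutator expectation. -/
theorem robertson_uncertainty {E : Type*} [NormedAddCommGroup E] [InnerProductSpace ℂ E]
    (A B : E →ₗ[ℂ] E)
    (hA : ∀ x y : E, (inner ℂ (A x) y : ℂ) = inner ℂ x (A y))
    (hB : ∀ x y : E, (inner ℂ (B x) y : ℂ) = inner ℂ x (B y))
    (ψ : E) (hψ : ‖ψ‖ = 1) :
    ‖A ψ - (inner ℂ ψ (A ψ) : ℂ) • ψ‖ * ‖B ψ - (inner ℂ ψ (B ψ) : ℂ) • ψ‖ ≥
      (1 / 2) * ‖(inner ℂ ψ ((A ∘ₗ B - B ∘ₗ A) ψ) : ℂ)‖ :=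
  robertson_uncertainty_general A B hA hB ψ
end

section
/- Let E be a complex inner product space, let A and B be symmetric linear operators on E, and let ψ ∈ E. Then ‖A ψ‖ · ‖B ψ‖ ≥ (1/2) · ‖⟪ψ, (A ∘ B - B ∘ A) ψ⟫‖. (This is the uncentered commutator bound, Eq. (16) of the paper, from which the uncertainty relation follows by replacing A and B with their centered versions.) -/
/-!
For symmetric `A`, `B` one has `⟪ψ, [A, B] ψ⟫ = z - conj z` with `z = ⟪A ψ, B ψ⟫`,
so its norm is at most `2 ‖z‖`, and Cauchy–Schwarz bounds `‖z‖` by `‖A ψ‖ ‖B ψ‖`.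
-/

open ComplexConjugate

section

variable {𝕜 E : Type*} [RCLike 𝕜] [NormedAddCommGroup E] [InnerProductSpace 𝕜 E]

theorem RCLike.norm_sub_conj_le (z : 𝕜) : ‖z - conj z‖ ≤ 2 * ‖z‖ :=
  calc ‖z - conj z‖ ≤ ‖z‖ + ‖conj z‖ := norm_sub_le _ _
    _ = 2 * ‖z‖ := by rw [RCLike.norm_conj]; ring

theorem LinearMap.IsSymmetric.inner_commutator_eq_sub_conj {A B : E →ₗ[𝕜] E}
    (hA : A.IsSymmetric) (hB : B.IsSymmetric) (ψ : E) :
    inner 𝕜 ψ ((A ∘ₗ B - B ∘ₗ A) ψ) =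
      inner 𝕜 (A ψ) (B ψ) - conj (inner 𝕜 (A ψ) (B ψ)) := by
  rw [LinearMap.sub_apply, LinearMap.comp_apply, LinearMap.comp_apply, inner_sub_right,
    ← hA ψ (B ψ), ← hB ψ (A ψ), inner_conj_symm]

end

/-- **Uncentered commutator bound** (Eq. (16) of the paper).
For symmetric operators `A`, `B` on a complex inner product space and any `ψ`,
`‖A ψ‖ · ‖B ψ‖ ≥ (1/2) · ‖⟪ψ, [A, B] ψ⟫‖`. -/
theorem uncentered_commutator_bound {E : Type*} [NormedAddCommGroup E] [InnerProductSpace ℂ E]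
    (A B : E →ₗ[ℂ] E)
    (hA : ∀ x y : E, (inner ℂ (A x) y : ℂ) = inner ℂ x (A y))
    (hB : ∀ x y : E, (inner ℂ (B x) y : ℂ) = inner ℂ x (B y))
    (ψ : E) :
    ‖A ψ‖ * ‖B ψ‖ ≥ (1 / 2) * ‖(inner ℂ ψ ((A ∘ₗ B - B ∘ₗ A) ψ) : ℂ)‖ := by
  rw [LinearMap.IsSymmetric.inner_commutator_eq_sub_conj hA hB, ge_iff_le]
  set z : ℂ := inner ℂ (A ψ) (B ψ)
  calc (1 / 2) * ‖z - conj z‖ ≤ ‖z‖ := by linarith [RCLike.norm_sub_conj_le z]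
    _ ≤ ‖A ψ‖ * ‖B ψ‖ := norm_inner_le_norm _ _
end

section
/- Let E be a complex inner product space, let A and B be symmetric linear operators on E, and let ψ ∈ E. Then ‖A ψ‖² + ‖B ψ‖² ≥ |(Complex.I * ⟪ψ, (A ∘ B - B ∘ A) ψ⟫).re|. (This is the positivity step, Eq. (15) of the paper: the nonnegativity of ⟨(a ∓ i b)²⟩ expanded using the symmetry of a and b.) -/
/-!
By symmetry of `A` and `B`, `⟪ψ, [A, B] ψ⟫ = c - conj c = 2i Im c` with `c = ⟪A ψ, B ψ⟫`, so the
right-hand side is `2 |Im c|`, which Cauchy–Schwarz and `2ab ≤ a² + b²` bound by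
`‖A ψ‖² + ‖B ψ‖²`.
-/

open ComplexConjugate

namespace LinearMap.IsSymmetric

variable {𝕜 E : Type*} [RCLike 𝕜] [NormedAddCommGroup E] [InnerProductSpace 𝕜 E]
  {A B : E →ₗ[𝕜] E}

theorem inner_commutator_apply_self (hA : A.IsSymmetric) (hB : B.IsSymmetric) (ψ : E) :
    inner 𝕜 ψ ((A ∘ₗ B - B ∘ₗ A) ψ) = inner 𝕜 (A ψ) (B ψ) - conj (inner 𝕜 (A ψ) (B ψ)) := by
  rw [sub_apply, inner_sub_right, comp_apply, comp_apply, ← hA, ← hB, inner_conj_symm]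

end LinearMap.IsSymmetric

theorem Complex.re_I_mul_sub_conj (z : ℂ) : (I * (z - conj z)).re = -2 * z.im := by
  simp [sub_conj]

theorem two_mul_abs_im_inner_le_add_sq {E : Type*} [NormedAddCommGroup E] [InnerProductSpace ℂ E]
    (x y : E) : 2 * |(inner ℂ x y).im| ≤ ‖x‖ ^ 2 + ‖y‖ ^ 2 :=
  calc 2 * |(inner ℂ x y).im| ≤ 2 * (‖x‖ * ‖y‖) := by
        gcongr; exact (Complex.abs_im_le_norm _).trans (norm_inner_le_norm x y)
    _ ≤ ‖x‖ ^ 2 + ‖y‖ ^ 2 := by rw [← mul_assoc]; exact two_mul_le_add_sq _ _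

/-- **Positivity step** (Eq. (15) of the paper).
For symmetric operators `A`, `B` on a complex inner product space and any `ψ`,
`‖A ψ‖² + ‖B ψ‖² ≥ |Re (i · ⟪ψ, [A, B] ψ⟫)|`. -/
theorem positivity_step {E : Type*} [NormedAddCommGroup E] [InnerProductSpace ℂ E]
    (A B : E →ₗ[ℂ] E)
    (hA : ∀ x y : E, (inner ℂ (A x) y : ℂ) = inner ℂ x (A y))
    (hB : ∀ x y : E, (inner ℂ (B x) y : ℂ) = inner ℂ x (B y))
    (ψ : E) :
    ‖A ψ‖ ^ 2 + ‖B ψ‖ ^ 2 ≥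
      |(Complex.I * (inner ℂ ψ ((A ∘ₗ B - B ∘ₗ A) ψ) : ℂ)).re| := by
  rw [LinearMap.IsSymmetric.inner_commutator_apply_self hA hB, Complex.re_I_mul_sub_conj,
    abs_mul, abs_neg, abs_two]
  exact two_mul_abs_im_inner_le_add_sq (A ψ) (B ψ)
end
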